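/- There exists a 2-fold embedding set {T_1, T_2, T_3, T_4} for 2K_4^3 — that is, each T_i is a closed walk in K_4 − i traversing every edge exactly twice, and any two of the circuits are compatible — such that for every subset U ⊆ [4], the family obtained by replacing T_u with its reversal T_u^{-1} for each u ∈ U is not a strong 2-fold embedding set. -/

import Mathlib

/-- Cyclic access into a list, used for reading a list of vertices as a closed walk:
the closed walk visits `cyc w 0, cyc w 1, …, cyc w (w.length - 1)` and returns to
`cyc w 0`. -/
def cyc (w : List ℕ) (k : ℕ) : ℕ := w.getD (k % w.length) 0

/-- The number of positions at which the closed walk `w` traverses the directed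
step from `a` to `b`. -/
def dirCount (w : List ℕ) (a b : ℕ) : ℕ :=
  ((List.range w.length).filter fun k => cyc w k = a ∧ cyc w (k + 1) = b).length

/-- The number of occurrences of the transition `a j b` (two consecutive edges
`aj`, `jb`) in the closed walk `w`; the wrap-around positions are included. -/
def transCount (w : List ℕ) (a j b : ℕ) : ℕ :=
  ((List.range w.length).filter fun k =>
      cyc w k = a ∧ cyc w (k + 1) = j ∧ cyc w (k + 2) = b).length

/-- `w` is an `m`-fold Eulerian circuit in `K_n − i`, the complete graph on the
vertex set `[n] \ {i}`: it is a nonempty closed walk, all its vertices lie in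
`[n] \ {i}`, consecutive vertices are distinct, and every edge of `K_n − i` is
traversed exactly `m` times (in either direction). -/
def IsEulerianM (n m i : ℕ) (w : List ℕ) : Prop :=
  w ≠ [] ∧
  (∀ v ∈ w, v ∈ Finset.Icc 1 n ∧ v ≠ i) ∧
  (∀ k < w.length, cyc w k ≠ cyc w (k + 1)) ∧
  (∀ a b : ℕ, a ∈ Finset.Icc 1 n → b ∈ Finset.Icc 1 n → a ≠ i → b ≠ i → a ≠ b →
    dirCount w a b + dirCount w b a = m)

/-- `w` is an Eulerian circuit in `K_n − i`. -/
def IsEulerian (n i : ℕ) (w : List ℕ) : Prop := IsEulerianM n 1 i w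

/-- Eulerian circuits `Ti` (in `K_n − i`) and `Tj` (in `K_n − j`) are strongly
compatible: for every transition `a j b` in `Ti`, `Tj` contains the transition
`b i a`. -/
def StrongCompat (i j : ℕ) (Ti Tj : List ℕ) : Prop :=
  ∀ a b : ℕ, 0 < transCount Ti a j b → 0 < transCount Tj b i a

/-- Eulerian circuits `Ti` (in `K_n − i`) and `Tj` (in `K_n − j`) are compatible:
for every transition `a j b` in `Ti`, `Tj` contains the transition `a i b` or the
transition `b i a`. -/
def Compat (i j : ℕ) (Ti Tj : List ℕ) : Prop :=
  ∀ a b : ℕ, 0 < transCount Ti a j b →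
    0 < transCount Tj a i b ∨ 0 < transCount Tj b i a

/-- `T 1, …, T n` is an embedding set for `K_n^3`. -/
def IsEmbeddingSet (n : ℕ) (T : ℕ → List ℕ) : Prop :=
  (∀ i ∈ Finset.Icc 1 n, IsEulerian n i (T i)) ∧
  (∀ i ∈ Finset.Icc 1 n, ∀ j ∈ Finset.Icc 1 n, i ≠ j → Compat i j (T i) (T j))

/-- `T 1, …, T n` is a strong embedding set for `K_n^3`. -/
def IsStrongEmbeddingSet (n : ℕ) (T : ℕ → List ℕ) : Prop :=
  (∀ i ∈ Finset.Icc 1 n, IsEulerian n i (T i)) ∧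
  (∀ i ∈ Finset.Icc 1 n, ∀ j ∈ Finset.Icc 1 n, i ≠ j → StrongCompat i j (T i) (T j))

/-- `m`-fold Eulerian circuits `Ti` (in `K_n − i`) and `Tj` (in `K_n − j`) are
strongly compatible: for every ordered pair `(a, b)`, the number of occurrences
of the transition `a j b` in `Ti` equals the number of occurrences of the
transition `b i a` in `Tj`. -/
def StrongCompatM (i j : ℕ) (Ti Tj : List ℕ) : Prop :=
  ∀ a b : ℕ, transCount Ti a j b = transCount Tj b i a

/-- `m`-fold Eulerian circuits `Ti` (in `K_n − i`) and `Tj` (in `K_n − j`) are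
compatible: for every unordered pair `{a, b}`, the number of occurrences of the
transitions `a j b` or `b j a` in `Ti` equals the number of occurrences of the
transitions `a i b` or `b i a` in `Tj`. -/
def CompatM (i j : ℕ) (Ti Tj : List ℕ) : Prop :=
  ∀ a b : ℕ, transCount Ti a j b + transCount Ti b j a
    = transCount Tj a i b + transCount Tj b i a

/-- `T 1, …, T n` is an `m`-fold embedding set for `mK_n^3`. -/
def IsEmbeddingSetM (n m : ℕ) (T : ℕ → List ℕ) : Prop :=
  (∀ i ∈ Finset.Icc 1 n, IsEulerianM n m i (T i)) ∧
  (∀ i ∈ Finset.Icc 1 n, ∀ j ∈ Finset.Icc 1 n, i ≠ j → CompatM i j (T i) (T j))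

/-- `T 1, …, T n` is a strong `m`-fold embedding set for `mK_n^3`. -/
def IsStrongEmbeddingSetM (n m : ℕ) (T : ℕ → List ℕ) : Prop :=
  (∀ i ∈ Finset.Icc 1 n, IsEulerianM n m i (T i)) ∧
  (∀ i ∈ Finset.Icc 1 n, ∀ j ∈ Finset.Icc 1 n, i ≠ j → StrongCompatM i j (T i) (T j))

def Tdef : ℕ → List ℕ
  | 1 => [2,3,2,4,3,4]
  | 2 => [1,3,4,1,3,4]
  | 3 => [1,2,4,1,4,2]
  | 4 => [1,2,3,1,2,3]
  | _ => []

lemma cyc_mem (w : List ℕ) (hw : w ≠ []) (k : ℕ) : cyc w k ∈ w := by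
  unfold cyc
  have hl : k % w.length < w.length := Nat.mod_lt _ (List.length_pos_iff.mpr hw)
  rw [List.getD_eq_getElem w 0 hl]
  exact List.getElem_mem hl

lemma transCount_zero_left (w : List ℕ) (a j b : ℕ) (h : ∀ v ∈ w, v ≤ 4)
    (ha : ¬ a ≤ 4) : transCount w a j b = 0 := by
  unfold transCount
  rw [List.length_eq_zero_iff, List.filter_eq_nil_iff]
  rintro k hk
  simp only [List.mem_range] at hk
  have hw : w ≠ [] := by rintro rfl; simp at hk
  simp only [decide_eq_true_eq, not_and]
  intro h1
  exact absurd (h _ (h1 ▸ cyc_mem w hw k)) ha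

lemma transCount_zero_right (w : List ℕ) (a j b : ℕ) (h : ∀ v ∈ w, v ≤ 4)
    (hb : ¬ b ≤ 4) : transCount w a j b = 0 := by
  unfold transCount
  rw [List.length_eq_zero_iff, List.filter_eq_nil_iff]
  rintro k hk
  simp only [List.mem_range] at hk
  have hw : w ≠ [] := by rintro rfl; simp at hk
  simp only [decide_eq_true_eq, not_and]
  intro _ _ h3
  exact absurd (h _ (h3 ▸ cyc_mem w hw (k+2))) hb

lemma compatM_of_bounded (i j : ℕ) (Ti Tj : List ℕ)
    (hi : ∀ v ∈ Ti, v ≤ 4) (hj : ∀ v ∈ Tj, v ≤ 4)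
    (h : ∀ a ≤ 4, ∀ b ≤ 4, transCount Ti a j b + transCount Ti b j a
      = transCount Tj a i b + transCount Tj b i a) : CompatM i j Ti Tj := by
  intro a b
  by_cases ha : a ≤ 4
  · by_cases hb : b ≤ 4
    · exact h a ha b hb
    · rw [transCount_zero_right Ti a j b hi hb, transCount_zero_left Ti b j a hi hb,
        transCount_zero_right Tj a i b hj hb, transCount_zero_left Tj b i a hj hb]
  · rw [transCount_zero_left Ti a j b hi ha, transCount_zero_right Ti b j a hi ha,
      transCount_zero_left Tj a i b hj ha, transCount_zero_right Tj b i a hj ha]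

lemma eulerian_of_bounded (m i : ℕ) (w : List ℕ)
    (h1 : w ≠ []) (h2 : ∀ v ∈ w, v ∈ Finset.Icc 1 4 ∧ v ≠ i)
    (h3 : ∀ k < w.length, cyc w k ≠ cyc w (k + 1))
    (h4 : ∀ a ∈ Finset.Icc 1 4, ∀ b ∈ Finset.Icc 1 4, a ≠ i → b ≠ i → a ≠ b →
      dirCount w a b + dirCount w b a = m) : IsEulerianM 4 m i w :=
  ⟨h1, h2, h3, fun a b ha hb => h4 a ha b hb⟩

/-- There exists a `2`-fold embedding set for `2K_4^3` such that no matter which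
subset of the circuits is replaced by its reversals, the resulting family is
never a strong `2`-fold embedding set. -/
theorem twofold_embedding_set_K4_not_strong :
    ∃ T : ℕ → List ℕ, IsEmbeddingSetM 4 2 T ∧
      ∀ T' : ℕ → List ℕ,
        (∀ i ∈ Finset.Icc 1 4, T' i = T i ∨ T' i = (T i).reverse) →
        ¬ IsStrongEmbeddingSetM 4 2 T' := by
  refine ⟨Tdef, ⟨?_, ?_⟩, ?_⟩
  · intro i hi
    simp only [Finset.mem_Icc] at hi
    obtain ⟨hi1, hi2⟩ := hi
    interval_cases i <;>
      exact eulerian_of_bounded _ _ _ (by decide) (by decide) (by decide) (by decide)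
  · intro i hi j hj hij
    simp only [Finset.mem_Icc] at hi hj
    obtain ⟨hi1, hi2⟩ := hi
    obtain ⟨hj1, hj2⟩ := hj
    interval_cases i <;> interval_cases j <;>
      first
        | exact absurd rfl hij
        | exact compatM_of_bounded _ _ _ _ (by decide) (by decide) (by decide)
  · intro T' hT' hs
    have h1 := hT' 1 (by decide)
    have h2 := hT' 2 (by decide)
    have key := hs.2 1 (by decide) 2 (by decide) (by decide) 3 4
    rcases h1 with e1 | e1 <;> rcases h2 with e2 | e2 <;>
      rw [e1, e2] at key <;> exact absurd key (by decide)
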